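/- Let T be a positive operator on an n-dimensional Hilbert space with trace(T) ≥ n·a and ‖T‖ ≤ M, where a > 0. Then there exists t with 0 < t < a such that ⌈n / rank(P_t)⌉ ≤ ⌈2M/a⌉, where P_t is the spectral projection of T on (t, ∞). -/

import Mathlib

open scoped ComplexOrder

/-!
At most `n·a/2` of the trace comes from eigenvalues `≤ a/2`, and each of the `k` eigenvalues
above `a/2` contributes at most `M`. Hence `n·a ≤ tr T ≤ k·M + n·a/2`, i.e. `n·a ≤ 2·M·k`, so
`n / k ≤ 2M/a` for `t = a/2`.
-/

open Finset

-- Also covers `y = 0`, where `x / 0 = 0`.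
lemma div_le_div_of_mul_le_mul_of_nonneg {x y a b : ℝ} (ha : 0 < a) (hb : 0 ≤ b) (hy : 0 ≤ y)
    (h : x * a ≤ b * y) : x / y ≤ b / a := by
  rcases hy.eq_or_lt with rfl | hy
  · rw [div_zero]
    positivity
  · rwa [div_le_div_iff₀ hy ha]

section Markov

variable {ι : Type*} (s : Finset ι) (f : ι → ℝ) {t M : ℝ}

lemma sum_le_card_filter_lt_mul_add (ht : 0 ≤ t) (hM : ∀ i ∈ s, f i ≤ M) :
    ∑ i ∈ s, f i ≤ #{i ∈ s | t < f i} * M + #s * t := by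
  rw [← sum_filter_add_sum_filter_not s (fun i => t < f i)]
  gcongr
  · calc ∑ i ∈ s with t < f i, f i ≤ ∑ _j ∈ {i ∈ s | t < f i}, M :=
          sum_le_sum fun i hi => hM i (mem_filter.1 hi).1
      _ = #{i ∈ s | t < f i} * M := by rw [sum_const, nsmul_eq_mul]
  · calc ∑ i ∈ s with ¬t < f i, f i ≤ ∑ _j ∈ {i ∈ s | ¬t < f i}, t :=
          sum_le_sum fun i hi => not_lt.1 (mem_filter.1 hi).2
      _ = #{i ∈ s | ¬t < f i} * t := by rw [sum_const, nsmul_eq_mul]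
      _ ≤ #s * t := by gcongr; exact filter_subset _ s

lemma card_mul_le_two_mul_mul_card_filter_half_lt {a : ℝ} (ha : 0 ≤ a) (hM : ∀ i ∈ s, f i ≤ M)
    (hsum : #s * a ≤ ∑ i ∈ s, f i) :
    #s * a ≤ 2 * M * #{i ∈ s | a / 2 < f i} := by
  have := sum_le_card_filter_lt_mul_add s f (t := a / 2) (by positivity) hM
  linarith

end Markov

namespace Matrix.IsHermitian

variable {𝕜 n : Type*} [RCLike 𝕜] [Fintype n] [DecidableEq n] {A : Matrix n n 𝕜}

lemma trace_re_eq_sum_eigenvalues (hA : A.IsHermitian) :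
    RCLike.re A.trace = ∑ i, hA.eigenvalues i := by
  simp [hA.trace_eq_sum_eigenvalues]

lemma eigenvalues_le_norm_toEuclideanCLM (hA : A.IsHermitian) (i : n) :
    hA.eigenvalues i ≤ ‖toEuclideanCLM (𝕜 := 𝕜) A‖ := by
  have : Nonempty n := ⟨i⟩
  have hmem : (hA.eigenvalues i : 𝕜) ∈ spectrum 𝕜 (toEuclideanCLM (𝕜 := 𝕜) A) := by
    rw [AlgEquiv.spectrum_eq]
    exact spectrum.algebraMap_mem 𝕜 (hA.eigenvalues_mem_spectrum_real i)
  calc hA.eigenvalues i ≤ ‖(hA.eigenvalues i : 𝕜)‖ := by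
        rw [RCLike.norm_ofReal]; exact le_abs_self _
    _ ≤ _ := spectrum.norm_le_norm_of_mem hmem

end Matrix.IsHermitian

/-- For a positive `n × n` matrix `T` with trace at least `n·a` and operator norm at
most `M` (a > 0), there exists `t` with `0 < t < a` such that
`⌈n / rank P_t⌉ ≤ ⌈2M/a⌉`, where `rank P_t` is the number of eigenvalues of `T`
exceeding `t`. -/
theorem ceil_rank_bound
    {n : ℕ} (T : Matrix (Fin n) (Fin n) ℂ) (hT : T.PosSemidef)
    (a M : ℝ) (ha : 0 < a)
    (htrace : (n : ℝ) * a ≤ (Matrix.trace T).re)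
    (hnorm : ‖Matrix.toEuclideanCLM (𝕜 := ℂ) T‖ ≤ M) :
    ∃ t : ℝ, 0 < t ∧ t < a ∧
      ⌈(n : ℝ) / (Finset.univ.filter fun i => t < hT.1.eigenvalues i).card⌉
        ≤ ⌈2 * M / a⌉ := by
  refine ⟨a / 2, half_pos ha, half_lt_self ha, Int.ceil_le_ceil ?_⟩
  have hM : 0 ≤ M := (norm_nonneg _).trans hnorm
  have hle : ∀ i ∈ univ, hT.1.eigenvalues i ≤ M := fun i _ =>
    (hT.1.eigenvalues_le_norm_toEuclideanCLM i).trans hnorm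
  have hsum : (#(univ : Finset (Fin n)) : ℝ) * a ≤ ∑ i, hT.1.eigenvalues i := by
    rwa [card_univ, Fintype.card_fin, ← hT.1.trace_re_eq_sum_eigenvalues]
  have hkey := card_mul_le_two_mul_mul_card_filter_half_lt univ _ ha.le hle hsum
  rw [card_univ, Fintype.card_fin] at hkey
  exact div_le_div_of_mul_le_mul_of_nonneg ha (by positivity) (Nat.cast_nonneg _) hkey
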